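/- For any graph G and any n ≥ 1, γ(P_n □ G) ≤ γ(G)·(2^n - 1), where □ denotes the Cartesian (box) product of graphs. -/
import Mathlib


open SimpleGraph Finset

/-- A pebbling step: remove two pebbles from `u` and place one on an adjacent vertex `v`. -/
def PebblingStep {V : Type*} [DecidableEq V] (G : SimpleGraph V) (D D' : V → ℕ) : Prop :=
  ∃ u v, G.Adj u v ∧ 2 ≤ D u ∧
    D' = fun w => if w = u then D u - 2 else if w = v then D v + 1 else D w

/-- A distribution is coverable if pebbling steps can put a pebble on every vertex. -/
def Coverable {V : Type*} [DecidableEq V] (G : SimpleGraph V) (D : V → ℕ) : Prop :=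
  ∃ D', Relation.ReflTransGen (PebblingStep G) D D' ∧ ∀ v, 1 ≤ D' v

/-- The cover pebbling number: the least `N` such that every distribution of `N` pebbles
is coverable. -/
noncomputable def coverPebblingNumber {V : Type*} [DecidableEq V] [Fintype V]
    (G : SimpleGraph V) : ℕ :=
  sInf {N | ∀ D : V → ℕ, ∑ v, D v = N → Coverable G D}

/-- A color-respecting pebbling step on a colored distribution. -/
def ColorStep {V C : Type*} [DecidableEq V] [DecidableEq C] (G : SimpleGraph V)
    (D D' : V → C → ℕ) : Prop :=
  ∃ u v c, G.Adj u v ∧ 2 ≤ D u c ∧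
    D' = fun w d => if w = u ∧ d = c then D u c - 2
      else if w = v ∧ d = c then D v c + 1 else D w d

/-- A colored distribution is `Q`-coverable if color-respecting steps can put at least `Q`
pebbles on every vertex. -/
def QCoverable {V C : Type*} [DecidableEq V] [DecidableEq C] [Fintype C] (G : SimpleGraph V)
    (Q : ℕ) (D : V → C → ℕ) : Prop :=
  ∃ D', Relation.ReflTransGen (ColorStep G) D D' ∧ ∀ v, Q ≤ ∑ c, D' v c

/-- A graph is good if its cover pebbling number is realized by a simple distribution. -/
def IsGood {V : Type*} [DecidableEq V] [Fintype V] (G : SimpleGraph V) : Prop :=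
  ∃ u : V, coverPebblingNumber G = ∑ w : V, 2 ^ G.dist u w

section Reach

variable {V : Type*} [DecidableEq V] {G : SimpleGraph V}

/-- Reachability by pebbling steps. -/
def Reach (G : SimpleGraph V) (D D' : V → ℕ) : Prop :=
  Relation.ReflTransGen (PebblingStep G) D D'

theorem Reach.refl (D : V → ℕ) : Reach G D D := Relation.ReflTransGen.refl

theorem Reach.trans {D E F : V → ℕ} (h₁ : Reach G D E) (h₂ : Reach G E F) : Reach G D F :=
  Relation.ReflTransGen.trans h₁ h₂

theorem reach_of_eq {D E : V → ℕ} (h : D = E) : Reach G D E := h ▸ Reach.refl D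

theorem PebblingStep.add_right {D E F : V → ℕ} (h : PebblingStep G D E) :
    PebblingStep G (D + F) (E + F) := by
  obtain ⟨u, v, hadj, hu, hE⟩ := h
  refine ⟨u, v, hadj, ?_, ?_⟩
  · have : D u ≤ (D + F) u := by simp [Pi.add_apply]
    omega
  · funext w
    have hEw : E w = if w = u then D u - 2 else if w = v then D v + 1 else D w := by rw [hE]
    by_cases h1 : w = u
    · subst h1; simp [hEw]; omega
    · by_cases h2 : w = v
      · subst h2; simp [hEw, h1]; omega
      · simp [hEw, h1, h2]

theorem Reach.add_right {D E : V → ℕ} (F : V → ℕ) (h : Reach G D E) :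
    Reach G (D + F) (E + F) := by
  induction h with
  | refl => exact Reach.refl _
  | tail _ hstep ih => exact ih.trans (Relation.ReflTransGen.single (hstep.add_right))

theorem Reach.add_left {D E : V → ℕ} (F : V → ℕ) (h : Reach G D E) :
    Reach G (F + D) (F + E) := by
  rw [add_comm F D, add_comm F E]; exact h.add_right F

theorem Reach.add {D E D' E' : V → ℕ} (h : Reach G D E) (h' : Reach G D' E') :
    Reach G (D + D') (E + E') :=
  (h.add_right D').trans (h'.add_left E)

theorem reach_sum {ι : Type*} [DecidableEq ι] (s : Finset ι) (F F' : ι → V → ℕ)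
    (h : ∀ i ∈ s, Reach G (F i) (F' i)) :
    Reach G (∑ i ∈ s, F i) (∑ i ∈ s, F' i) := by
  induction s using Finset.induction with
  | empty => simpa using Reach.refl (0 : V → ℕ)
  | @insert a s' hx ih =>
    rw [Finset.sum_insert hx, Finset.sum_insert hx]
    exact (h a (Finset.mem_insert_self a s')).add
      (ih fun i hi => h i (Finset.mem_insert_of_mem hi))

theorem PebblingStep.sum_le [Fintype V] {D E : V → ℕ} (h : PebblingStep G D E) :
    ∑ w, E w ≤ ∑ w, D w := by
  obtain ⟨u, v, hadj, hu, hE⟩ := h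
  have huv : u ≠ v := hadj.ne
  have key : ∀ w, E w + (if w = u then 2 else 0) = D w + (if w = v then 1 else 0) := by
    intro w
    have hEw : E w = if w = u then D u - 2 else if w = v then D v + 1 else D w := by rw [hE]
    by_cases h1 : w = u
    · subst h1; rw [hEw]; simp [huv]; omega
    · by_cases h2 : w = v
      · subst h2; rw [hEw]; simp [h1]
      · rw [hEw]; simp [h1, h2]
  have hsum : (∑ w, E w) + 2 = (∑ w, D w) + 1 := by
    have h1 : ∑ w, (E w + (if w = u then 2 else 0)) = ∑ w, (D w + (if w = v then 1 else 0)) :=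
      Finset.sum_congr rfl (fun w _ => key w)
    rw [Finset.sum_add_distrib, Finset.sum_add_distrib] at h1
    simpa using h1
  omega

theorem Reach.sum_le [Fintype V] {D E : V → ℕ} (h : Reach G D E) :
    ∑ w, E w ≤ ∑ w, D w := by
  induction h with
  | refl => exact le_refl _
  | tail _ hstep ih => exact le_trans hstep.sum_le ih

end Reach

section Moves

variable {V : Type*} [DecidableEq V] {G : SimpleGraph V}

/-- Move `k` pebbles from `a` to adjacent `b`, consuming `2k` pebbles at `a`. -/
theorem reach_move {a b : V} (hab : G.Adj a b) (k : ℕ) (D : V → ℕ) (h : 2 * k ≤ D a) :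
    Reach G D (fun w => if w = a then D a - 2 * k else if w = b then D b + k else D w) := by
  induction k generalizing D with
  | zero =>
    apply reach_of_eq
    funext w
    by_cases h1 : w = a
    · subst h1; simp
    · by_cases h2 : w = b
      · subst h2; simp [hab.ne']
      · simp [h1, h2]
  | succ k ih =>
    have hab' : a ≠ b := hab.ne
    have h2a : 2 ≤ D a := by omega
    set D₁ : V → ℕ := fun w => if w = a then D a - 2 else if w = b then D b + 1 else D w with hD₁
    have hstep : PebblingStep G D D₁ := ⟨a, b, hab, h2a, rfl⟩
    have h1a : D₁ a = D a - 2 := by simp [hD₁]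
    have h1b : D₁ b = D b + 1 := by simp [hD₁, hab'.symm]
    have hk : 2 * k ≤ D₁ a := by omega
    have := ih D₁ hk
    refine Relation.ReflTransGen.head hstep (this.trans (reach_of_eq ?_))
    funext w
    by_cases hw : w = a
    · subst hw; simp [h1a]; omega
    · by_cases hw2 : w = b
      · subst hw2; simp [hD₁, hw, h1b]; omega
      · simp [hD₁, hw, hw2]

/-- Serve a target along a walk: from a stack at `x`, deliver `k` pebbles to `w`. -/
theorem reach_walk {x w : V} (p : G.Walk x w) (k : ℕ) (D : V → ℕ)
    (hD : k * 2 ^ p.length ≤ D x) :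
    ∃ E : V → ℕ, Reach G D E ∧ k ≤ E w ∧ (∀ z, z ≠ x → D z ≤ E z) ∧
      D x ≤ E x + k * 2 ^ p.length := by
  induction p generalizing D with
  | nil =>
    exact ⟨D, Reach.refl D, by simpa using hD, fun z _ => le_refl _, by omega⟩
  | @cons x y w hadj p ih =>
    have hxy : x ≠ y := hadj.ne
    have hpow : k * 2 ^ (SimpleGraph.Walk.cons hadj p).length = 2 * (k * 2 ^ p.length) := by
      rw [SimpleGraph.Walk.length_cons, pow_succ]; ring
    have hcost : 2 * (k * 2 ^ p.length) ≤ D x := by omega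
    set D₁ : V → ℕ := fun z => if z = x then D x - 2 * (k * 2 ^ p.length)
      else if z = y then D y + k * 2 ^ p.length else D z with hD₁
    have hmv : Reach G D D₁ := reach_move hadj _ D hcost
    have h1y : D₁ y = D y + k * 2 ^ p.length := by simp [hD₁, hxy.symm]
    have h1x : D₁ x = D x - 2 * (k * 2 ^ p.length) := by simp [hD₁]
    obtain ⟨E, hE, hEw, hEmono, hEx⟩ := ih D₁ (by omega)
    refine ⟨E, hmv.trans hE, hEw, ?_, ?_⟩
    · intro z hz
      by_cases hzy : z = y
      · subst hzy; have := hEx; omega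
      · have hz1 : D₁ z = D z := by simp [hD₁, hz, hzy]
        calc D z = D₁ z := hz1.symm
        _ ≤ E z := hEmono z hzy
    · have hx' : D₁ x ≤ E x := hEmono x hxy
      omega

/-- Extract a sub-distribution with a prescribed total. -/
theorem exists_sub_dist {ι : Type*} [DecidableEq ι] [Fintype ι] (f : ι → ℕ) (γ : ℕ)
    (h : γ ≤ ∑ v, f v) : ∃ g : ι → ℕ, (∀ v, g v ≤ f v) ∧ ∑ v, g v = γ := by
  set d := (∑ v, f v) - γ with hd
  clear_value d
  have hsum : ∑ v, f v = γ + d := by omega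
  clear h hd
  induction d generalizing f with
  | zero => exact ⟨f, fun v => le_refl _, by omega⟩
  | succ d ih =>
    have : ∃ v, 0 < f v := by
      by_contra hc
      push_neg at hc
      have : ∑ v, f v = 0 := Finset.sum_eq_zero (fun v _ => by have := hc v; omega)
      omega
    obtain ⟨v₀, hv₀⟩ := this
    set f' := Function.update f v₀ (f v₀ - 1) with hf'
    have hsum' : ∑ v, f' v = γ + d := by
      rw [hf', Finset.sum_update_of_mem (Finset.mem_univ v₀)]
      have : ∑ v, f v = f v₀ + ∑ x ∈ Finset.univ \ {v₀}, f x := by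
        rw [← Finset.sum_update_of_mem (Finset.mem_univ v₀) f (f v₀)]
        simp [Function.update_eq_self]
      omega
    obtain ⟨g, hg, hgsum⟩ := ih f' hsum'
    refine ⟨g, fun v => ?_, hgsum⟩
    by_cases hv : v = v₀
    · subst hv; have := hg v; simp [hf', Function.update] at this; omega
    · have := hg v; simpa [hf', Function.update, hv] using this

/-- Sum of halves bound. -/
theorem sum_halves {ι : Type*} [Fintype ι] (f : ι → ℕ) :
    ∑ v, f v ≤ 2 * (∑ v, f v / 2) + Fintype.card ι := by
  have hpt : ∀ v : ι, f v ≤ 2 * (f v / 2) + 1 := fun v => by omega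
  calc ∑ v, f v ≤ ∑ v, (2 * (f v / 2) + 1) := Finset.sum_le_sum (fun v _ => hpt v)
  _ = 2 * (∑ v, f v / 2) + Fintype.card ι := by
      rw [Finset.sum_add_distrib, ← Finset.mul_sum, Finset.sum_const, smul_eq_mul, mul_one,
        Finset.card_univ]

end Moves

section Gamma

variable {V : Type*} [DecidableEq V] [Fintype V] {G : SimpleGraph V}

omit [Fintype V] in
theorem Coverable.add_right {D F : V → ℕ} (h : Coverable G D) : Coverable G (D + F) := by
  obtain ⟨E, hr, h1⟩ := h
  exact ⟨E + F, Reach.add_right F hr, fun v => le_trans (h1 v) (by simp)⟩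

theorem coverable_of_le {γ : ℕ} (HQ : ∀ D : V → ℕ, ∑ v, D v = γ → Coverable G D)
    (F : V → ℕ) (hF : γ ≤ ∑ v, F v) : Coverable G F := by
  obtain ⟨F₀, hle, hsum⟩ := exists_sub_dist F γ hF
  have hsplit : F = F₀ + (fun v => F v - F₀ v) := by
    funext v; have := hle v; simp [Pi.add_apply]; omega
  rw [hsplit]
  exact (HQ F₀ hsum).add_right

omit [Fintype V] in
theorem reach_serve (x : V) (L : ℕ) (S : Finset V) :
    ∀ D : V → ℕ, x ∉ S → (∀ w ∈ S, ∃ p : G.Walk x w, p.length ≤ L) → S.card * 2 ^ L ≤ D x →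
    ∃ E : V → ℕ, Reach G D E ∧ (∀ w ∈ S, 1 ≤ E w) ∧ (∀ z, z ≠ x → D z ≤ E z) ∧
      D x ≤ E x + S.card * 2 ^ L := by
  induction S using Finset.induction with
  | empty => intro D _ _ _; exact ⟨D, Reach.refl D, by simp, fun z _ => le_refl _, by simp⟩
  | @insert w₀ S hw₀S ih =>
    intro D hx hwalks hbudget
    have hxw₀ : w₀ ≠ x := fun h => hx (h ▸ Finset.mem_insert_self w₀ S)
    have hcard : (insert w₀ S).card = S.card + 1 := Finset.card_insert_of_notMem hw₀S
    obtain ⟨p₀, hp₀⟩ := hwalks w₀ (Finset.mem_insert_self w₀ S)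
    have hp₀L : (2:ℕ) ^ p₀.length ≤ 2 ^ L := Nat.pow_le_pow_right (by norm_num) hp₀
    have hb1 : 1 * 2 ^ p₀.length ≤ D x := by
      have : 2 ^ L ≤ (insert w₀ S).card * 2 ^ L := Nat.le_mul_of_pos_left _ (by
        rw [hcard]; omega)
      omega
    obtain ⟨E₁, hr₁, hw₀E, hmono₁, hx₁⟩ := reach_walk p₀ 1 D hb1
    have hxS : x ∉ S := fun h => hx (Finset.mem_insert_of_mem h)
    have hb2 : S.card * 2 ^ L ≤ E₁ x := by
      rw [hcard] at hbudget
      have hmul : (S.card + 1) * 2 ^ L = S.card * 2 ^ L + 2 ^ L := by ring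
      omega
    obtain ⟨E, hr, hSE, hmono, hxE⟩ := ih E₁ hxS
      (fun w hw => hwalks w (Finset.mem_insert_of_mem hw)) hb2
    refine ⟨E, hr₁.trans hr, ?_, ?_, ?_⟩
    · intro w hw
      rcases Finset.mem_insert.mp hw with h | h
      · subst h; exact le_trans hw₀E (hmono w hxw₀)
      · exact hSE w h
    · intro z hz; exact le_trans (hmono₁ z hz) (hmono z hz)
    · rw [hcard]
      have hmul : (S.card + 1) * 2 ^ L = S.card * 2 ^ L + 2 ^ L := by ring
      omega

/-- The defining set of the cover pebbling number is nonempty for connected graphs. -/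
theorem cover_set_nonempty [Nonempty V] (hG : G.Connected) :
    {N | ∀ D : V → ℕ, ∑ v, D v = N → Coverable G D}.Nonempty := by
  set c := Fintype.card V with hc
  have hc1 : 1 ≤ c := Fintype.card_pos
  refine ⟨c * (1 + c * 2 ^ c), fun D hsum => ?_⟩
  have hex : ∃ x, 1 + c * 2 ^ c ≤ D x := by
    by_contra hcon
    push_neg at hcon
    have : ∑ v, D v ≤ c * (c * 2 ^ c) := by
      calc ∑ v, D v ≤ Finset.univ.card • (c * 2 ^ c) :=
        Finset.sum_le_card_nsmul _ _ _ (fun v _ => by have := hcon v; omega)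
      _ = c * (c * 2 ^ c) := by rw [Finset.card_univ, smul_eq_mul]
    nlinarith
  obtain ⟨x, hx⟩ := hex
  have hwalks : ∀ w ∈ Finset.univ.erase x, ∃ p : G.Walk x w, p.length ≤ c := by
    intro w _
    obtain ⟨q⟩ := hG.preconnected x w
    refine ⟨q.toPath.1, le_of_lt ?_⟩
    exact q.toPath.2.length_lt
  have hbudget : (Finset.univ.erase x).card * 2 ^ c ≤ D x := by
    have hcard : (Finset.univ.erase x).card = c - 1 := by
      rw [Finset.card_erase_of_mem (Finset.mem_univ x), Finset.card_univ]
    rw [hcard]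
    have : (c - 1) * 2 ^ c ≤ c * 2 ^ c := Nat.mul_le_mul_right _ (by omega)
    omega
  obtain ⟨E, hr, hSE, hmono, hxE⟩ :=
    reach_serve x c (Finset.univ.erase x) D (Finset.notMem_erase x _) hwalks hbudget
  refine ⟨E, hr, fun v => ?_⟩
  by_cases hv : v = x
  · subst hv
    have hcard : (Finset.univ.erase v).card = c - 1 := by
      rw [Finset.card_erase_of_mem (Finset.mem_univ v), Finset.card_univ]
    rw [hcard] at hxE
    have : (c - 1) * 2 ^ c ≤ c * 2 ^ c := Nat.mul_le_mul_right _ (by omega)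
    omega
  · exact hSE v (Finset.mem_erase.mpr ⟨hv, Finset.mem_univ v⟩)

theorem gamma_mem [Nonempty V] (hG : G.Connected) :
    ∀ D : V → ℕ, ∑ v, D v = coverPebblingNumber G → Coverable G D :=
  Nat.sInf_mem (cover_set_nonempty hG)

theorem card_le_gamma [Nonempty V] (hG : G.Connected) :
    Fintype.card V ≤ coverPebblingNumber G := by
  obtain ⟨v₀⟩ := ‹Nonempty V›
  set γ := coverPebblingNumber G with hγ
  have HQ := gamma_mem hG (G := G)
  set D₀ : V → ℕ := fun u => if u = v₀ then γ else 0 with hD₀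
  have hsum : ∑ v, D₀ v = γ := by simp [hD₀]
  obtain ⟨E, hr, h1⟩ := HQ D₀ hsum
  calc Fintype.card V = ∑ _v : V, 1 := by simp
  _ ≤ ∑ v, E v := Finset.sum_le_sum (fun v _ => h1 v)
  _ ≤ ∑ v, D₀ v := Reach.sum_le hr
  _ = γ := hsum

end Gamma

section Product

variable {V : Type*} [DecidableEq V] [Fintype V] {G : SimpleGraph V} {n : ℕ}

/-- Column restriction of a distribution on the product. -/
def colD (D : Fin n × V → ℕ) (u : V) : Fin n × V → ℕ := fun q => if q.2 = u then D q else 0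

theorem sum_colD (D : Fin n × V → ℕ) : ∑ u : V, colD D u = D := by
  funext q
  rw [Finset.sum_apply]
  simp [colD]

/-- Parallel transfer: in each column, move `m u` pebbles from layer `j` to adjacent layer `j'`. -/
theorem reach_par {j j' : Fin n} (hadj : (pathGraph n).Adj j j') (m : V → ℕ)
    (D : Fin n × V → ℕ) (hm : ∀ u, 2 * m u ≤ D (j, u)) :
    Reach (pathGraph n □ G) D
      (fun q => if q.1 = j then D q - 2 * m q.2 else if q.1 = j' then D q + m q.2 else D q) := by
  have hjj' : j ≠ j' := by
    intro h
    exact (pathGraph n).irrefl (h ▸ hadj)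
  set P : V → Fin n × V → ℕ := colD D with hP
  set P' : V → Fin n × V → ℕ := fun u q =>
    if q = (j, u) then P u (j, u) - 2 * m u
    else if q = (j', u) then P u (j', u) + m u else P u q with hP'
  have hreach : ∀ u ∈ Finset.univ, Reach (pathGraph n □ G) (P u) (P' u) := by
    intro u _
    have hadj2 : (pathGraph n □ G).Adj (j, u) (j', u) := SimpleGraph.boxProd_adj_left.mpr hadj
    have hbud : 2 * m u ≤ P u (j, u) := by simpa [hP, colD] using hm u
    exact reach_move hadj2 (m u) (P u) hbud
  have h1 : ∑ u : V, P u = D := sum_colD D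
  have h2 : ∑ u : V, P' u
      = (fun q => if q.1 = j then D q - 2 * m q.2 else if q.1 = j' then D q + m q.2 else D q) := by
    funext q
    rw [Finset.sum_apply]
    rw [Finset.sum_eq_single q.2]
    · by_cases hq : q.1 = j
      · have hqe : q = (j, q.2) := by rw [Prod.ext_iff]; exact ⟨hq, rfl⟩
        rw [hP']
        simp only [← hqe, if_pos rfl, hq, if_pos rfl]
        simp [hP, colD, ← hqe]
      · by_cases hq' : q.1 = j'
        · have hqe : q = (j', q.2) := by rw [Prod.ext_iff]; exact ⟨hq', rfl⟩
          have hne : q ≠ (j, q.2) := by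
            rw [Ne, Prod.ext_iff]; push_neg; intro h; exact absurd h hq
          rw [hP']
          simp only [if_neg hne, ← hqe, if_pos rfl, hq, hq', if_pos rfl]
          rw [if_neg (Ne.symm hjj')]
          simp [hP, colD, ← hqe, hq, hq']
        · have hne : q ≠ (j, q.2) := by
            rw [Ne, Prod.ext_iff]; push_neg; intro h; exact absurd h hq
          have hne' : q ≠ (j', q.2) := by
            rw [Ne, Prod.ext_iff]; push_neg; intro h; exact absurd h hq'
          rw [hP']
          simp only [if_neg hne, if_neg hne']
          simp [hP, colD, hq, hq']
    · intro u _ hu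
      have hne : q ≠ (j, u) := by
        rw [Ne, Prod.ext_iff]; push_neg; intro _; exact fun h => hu h.symm
      have hne' : q ≠ (j', u) := by
        rw [Ne, Prod.ext_iff]; push_neg; intro _; exact fun h => hu h.symm
      rw [hP']
      simp only [if_neg hne, if_neg hne']
      rw [hP]
      simp only [colD]
      rw [if_neg (fun h => hu h.symm)]
    · intro h
      exact absurd (Finset.mem_univ q.2) h
  calc Reach (pathGraph n □ G) D (∑ u : V, P' u) := by
        rw [← h1] at *
        exact reach_sum Finset.univ P P' hreach
  _ = _ := by rw [h2]

/-- Lift of a distribution on `G` to layer `i` of the product. -/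
def liftF (i : Fin n) (F : V → ℕ) : Fin n × V → ℕ := fun q => if q.1 = i then F q.2 else 0

theorem pebblingStep_lift {i : Fin n} {F F' : V → ℕ} (h : PebblingStep G F F') :
    PebblingStep (pathGraph n □ G) (liftF i F) (liftF i F') := by
  obtain ⟨u, v, hadj, hu, hF'⟩ := h
  refine ⟨(i, u), (i, v), SimpleGraph.boxProd_adj_right.mpr hadj, by simpa [liftF] using hu, ?_⟩
  funext q
  have hF'q : F' q.2 = if q.2 = u then F u - 2 else if q.2 = v then F v + 1 else F q.2 := by
    rw [hF']
  by_cases hqi : q.1 = i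
  · have hq1 : q = (i, q.2) := by rw [Prod.ext_iff]; exact ⟨hqi, rfl⟩
    by_cases hqu : q.2 = u
    · have hq2 : q = (i, u) := by rw [Prod.ext_iff]; exact ⟨hqi, hqu⟩
      simp only [liftF, hq2, if_pos rfl]
      rw [hF']
      simp
    · have hne : q ≠ (i, u) := by rw [Ne, Prod.ext_iff]; push_neg; intro _; exact fun h => hqu h
      by_cases hqv : q.2 = v
      · have hq2 : q = (i, v) := by rw [Prod.ext_iff]; exact ⟨hqi, hqv⟩
        simp only [liftF, if_neg hne, hq2, if_pos rfl]
        rw [hF']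
        by_cases hvu : v = u <;> simp [hvu]
      · have hne' : q ≠ (i, v) := by rw [Ne, Prod.ext_iff]; push_neg; intro _; exact fun h => hqv h
        simp only [liftF, if_neg hne, if_neg hne', if_pos hqi]
        rw [hF'q]
        simp [hqu, hqv]
  · have hne : q ≠ (i, u) := by rw [Ne, Prod.ext_iff]; push_neg; intro h; exact absurd h hqi
    have hne' : q ≠ (i, v) := by rw [Ne, Prod.ext_iff]; push_neg; intro h; exact absurd h hqi
    simp [liftF, hne, hne', hqi]

theorem reach_lift {i : Fin n} {F F' : V → ℕ} (h : Reach G F F') :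
    Reach (pathGraph n □ G) (liftF i F) (liftF i F') := by
  induction h with
  | refl => exact Reach.refl _
  | tail _ hstep ih => exact ih.trans (Relation.ReflTransGen.single (pebblingStep_lift hstep))

theorem sum_liftF_layers (D : Fin n × V → ℕ) :
    ∑ i : Fin n, liftF i (fun u => D (i, u)) = D := by
  funext q
  rw [Finset.sum_apply]
  have : ∀ i : Fin n, liftF i (fun u => D (i, u)) q = if q.1 = i then D q else 0 := by
    intro i
    by_cases hqi : q.1 = i
    · have hq1 : q = (i, q.2) := by rw [Prod.ext_iff]; exact ⟨hqi, rfl⟩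
      simp [liftF, hqi, ← hq1]
    · simp [liftF, hqi]
  rw [Finset.sum_congr rfl (fun i _ => this i)]
  simp

end Product

section Main

variable {V : Type*} [DecidableEq V] [Fintype V] {G : SimpleGraph V} {n : ℕ}

omit [DecidableEq V] in
theorem sum_layer_ite (D : Fin n × V → ℕ) (j : Fin n) :
    ∑ p : Fin n × V, (if p.1 = j then D p else 0) = ∑ u, D (j, u) := by
  rw [Fintype.sum_prod_type]
  have h1 : ∀ j' : Fin n, ∑ u, (if j' = j then D (j', u) else 0)
      = if j' = j then ∑ u, D (j', u) else 0 := by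
    intro j'
    by_cases h : j' = j <;> simp [h]
  rw [Finset.sum_congr rfl (fun j' _ => h1 j')]
  simp

omit [DecidableEq V] in
theorem sum_split_layer (D : Fin n × V → ℕ) (j : Fin n) :
    ∑ p : Fin n × V, D p = ∑ u, D (j, u) + ∑ p : Fin n × V, (if p.1 = j then 0 else D p) := by
  have h1 : ∀ p : Fin n × V, D p
      = (if p.1 = j then D p else 0) + (if p.1 = j then 0 else D p) := by
    intro p; by_cases h : p.1 = j <;> simp [h]
  calc ∑ p : Fin n × V, D p
      = ∑ p : Fin n × V, ((if p.1 = j then D p else 0) + (if p.1 = j then 0 else D p)) :=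
        Finset.sum_congr rfl (fun p _ => h1 p)
  _ = _ := by rw [Finset.sum_add_distrib, sum_layer_ite]

theorem main_induction (γ : ℕ) (hB : Fintype.card V ≤ γ) (k : ℕ) :
    ∀ (a : ℕ) (ha : a < n) (_hk : n = a + 1 + k) (δ : ℕ) (D : Fin n × V → ℕ),
    (∀ (j : Fin n) (u : V), j.val < a → D (j, u) = 0) →
    γ * (2 ^ (k + 1) - 1) + δ * 2 ^ (k + 1) ≤ ∑ p, D p →
    ∃ (E : Fin n × V → ℕ) (e : V → ℕ),
      Reach (pathGraph n □ G) D E ∧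
      (∀ u, 2 * e u ≤ E (⟨a, ha⟩, u)) ∧
      (∑ u, e u = δ) ∧
      (γ + 2 * δ ≤ ∑ u, E (⟨a, ha⟩, u)) ∧
      (∀ i : Fin n, a < i.val → γ ≤ ∑ u, E (i, u)) := by
  induction k with
  | zero =>
    intro a ha hk δ D hsupp htot
    set la : Fin n := ⟨a, ha⟩ with hla
    have hrest : ∑ p : Fin n × V, (if p.1 = la then 0 else D p) = 0 := by
      apply Finset.sum_eq_zero
      intro p _
      by_cases h : p.1 = la
      · simp [h]
      · have hval : p.1.val ≠ a := fun hc => h (Fin.ext hc)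
        have hlt : p.1.val < a := by have := p.1.isLt; omega
        simp [h, hsupp p.1 p.2 hlt, Prod.mk.eta]
    have htotal : ∑ p, D p = ∑ u, D (la, u) := by
      rw [sum_split_layer D la, hrest]
      omega
    set f : V → ℕ := fun u => D (la, u) with hf
    have hc : γ + 2 * δ ≤ ∑ u, f u := by
      have h2 : (2:ℕ) ^ (0 + 1) = 2 := by norm_num
      rw [h2] at htot
      have h3 : ∑ u, f u = ∑ p, D p := by rw [htotal]
      omega
    have hhalf : δ ≤ ∑ u, f u / 2 := by
      have := sum_halves f
      omega
    obtain ⟨e, he, hesum⟩ := exists_sub_dist (fun u => f u / 2) δ hhalf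
    refine ⟨D, e, Reach.refl D, fun u => ?_, hesum, hc, fun i hi => ?_⟩
    · have := he u
      have : 2 * e u ≤ 2 * (f u / 2) := by omega
      have h2 : 2 * (f u / 2) ≤ f u := by omega
      simpa [hf] using le_trans this h2
    · exfalso
      have := i.isLt
      omega
  | succ k ih =>
    intro a ha hk δ D hsupp htot
    have ha' : a + 1 < n := by omega
    set la : Fin n := ⟨a, ha⟩ with hla
    set la' : Fin n := ⟨a + 1, ha'⟩ with hla'
    have hlane : la ≠ la' := by
      rw [hla, hla', Ne, Fin.ext_iff]; simp
    have hadj : (pathGraph n).Adj la la' := by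
      rw [SimpleGraph.pathGraph_adj]; left; simp [hla, hla']
    set X := (2:ℕ) ^ (k + 1) with hXdef
    have hX1 : 1 ≤ X := Nat.one_le_two_pow
    have hXX : (2:ℕ) ^ (k + 1 + 1) = 2 * X := by rw [pow_succ]; ring
    have egX : γ * (2 ^ (k + 1 + 1) - 1) + γ = 2 * (γ * X) := by
      have h1 : 2 * X - 1 + 1 = 2 * X := by omega
      calc γ * (2 ^ (k + 1 + 1) - 1) + γ = γ * ((2 * X - 1) + 1) := by rw [hXX]; ring
      _ = 2 * (γ * X) := by rw [h1]; ring
    have egX' : γ * (2 ^ (k + 1) - 1) + γ = γ * X := by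
      have h1 : X - 1 + 1 = X := by omega
      calc γ * (2 ^ (k + 1) - 1) + γ = γ * ((X - 1) + 1) := by rw [← hXdef]; ring
      _ = γ * X := by rw [h1]
    have edX : δ * 2 ^ (k + 1 + 1) = 2 * (δ * X) := by rw [hXX]; ring
    have hdX : δ ≤ δ * X := Nat.le_mul_of_pos_right δ (by omega)
    set f : V → ℕ := fun u => D (la, u) with hf
    set c := ∑ u, f u with hcdef
    have hcsplit : ∑ p, D p = c + ∑ p : Fin n × V, (if p.1 = la then 0 else D p) :=
      sum_split_layer D la
    by_cases hrich : γ + 2 * δ ≤ c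
    · -- rich case
      set t := γ * X - γ - (∑ p, D p - c) with htdef
      have hkept : γ + 2 * δ + 2 * t ≤ c := by omega
      have hhalfsum := sum_halves f
      have hpairs : δ + t ≤ ∑ u, f u / 2 := by omega
      obtain ⟨h₀, hh₀, hh₀sum⟩ := exists_sub_dist (fun u => f u / 2) (δ + t) hpairs
      obtain ⟨e, he, hesum'⟩ := exists_sub_dist h₀ δ (by omega)
      set m : V → ℕ := fun u => h₀ u - e u with hm
      have hmsum : ∑ u, m u = t := by
        have hpt : ∀ u, h₀ u = e u + m u := fun u => by
          have := he u; simp only [hm]; omega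
        have hs : ∑ u, h₀ u = ∑ u, e u + ∑ u, m u := by
          rw [← Finset.sum_add_distrib]
          exact Finset.sum_congr rfl (fun u _ => hpt u)
        omega
      have hmle : ∀ u, 2 * m u ≤ D (la, u) := by
        intro u
        have h1 := hh₀ u
        have h2 := he u
        have h3 : 2 * (f u / 2) ≤ f u := by omega
        show 2 * m u ≤ f u
        simp only [hm]
        omega
      have hreach1 := reach_par (G := G) hadj m D hmle
      set D₁ : Fin n × V → ℕ := fun q =>
        if q.1 = la then D q - 2 * m q.2 else if q.1 = la' then D q + m q.2 else D q with hD₁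
      set L : Fin n × V → ℕ := fun q => if q.1 = la then D₁ q else 0 with hL
      set D₁' : Fin n × V → ℕ := fun p => if p.1 = la then 0 else D₁ p with hD₁'
      have hsplitD₁ : D₁ = D₁' + L := by
        funext q
        by_cases h : q.1 = la <;> simp [hD₁', hL, h]
      have hsupp' : ∀ (j : Fin n) (u : V), j.val < a + 1 → D₁' (j, u) = 0 := by
        intro j u hj
        by_cases hjla : j = la
        · simp [hD₁', hjla]
        · have hjv : j.val ≠ a := fun hc => hjla (Fin.ext hc)
          have hjla' : j ≠ la' := by
            intro hc
            rw [hc] at hj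
            simp [hla'] at hj
          have : D₁' (j, u) = D (j, u) := by simp [hD₁', hD₁, hjla, hjla']
          rw [this]
          exact hsupp j u (by omega)
      -- layer-a sum of D₁
      have hlayD₁ : ∑ u, D₁ (la, u) + 2 * t = c := by
        have hpt : ∀ u, D₁ (la, u) + 2 * m u = f u := by
          intro u
          have h1 := hmle u
          simp only [hD₁, if_pos rfl]
          show D (la, u) - 2 * m u + 2 * m u = f u
          have hfu : f u = D (la, u) := rfl
          omega
        have hs : ∑ u, (D₁ (la, u) + 2 * m u) = ∑ u, f u :=
          Finset.sum_congr rfl (fun u _ => hpt u)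
        rw [Finset.sum_add_distrib, ← Finset.mul_sum] at hs
        omega
      -- total of D₁
      have hsumD₁ : ∑ p, D₁ p + 2 * t = ∑ p, D p + t := by
        have hpt : ∀ q : Fin n × V, D₁ q + (if q.1 = la then 2 * m q.2 else 0)
            = D q + (if q.1 = la' then m q.2 else 0) := by
          intro q
          by_cases hq : q.1 = la
          · have hq' : q.1 ≠ la' := fun hc => hlane (hq ▸ hc ▸ rfl)
            have := hmle (q.2)
            have hDla : D (la, q.2) = D q := by
              have : q = (la, q.2) := by rw [Prod.ext_iff]; exact ⟨hq, rfl⟩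
              rw [← this]
            simp only [hD₁, if_pos hq, if_neg hq']
            omega
          · by_cases hq' : q.1 = la'
            · simp [hD₁, hq, hq', Ne.symm hlane]
            · simp [hD₁, hq, hq']
        have hs : ∑ q : Fin n × V, (D₁ q + (if q.1 = la then 2 * m q.2 else 0))
            = ∑ q : Fin n × V, (D q + (if q.1 = la' then m q.2 else 0)) :=
          Finset.sum_congr rfl (fun q _ => hpt q)
        rw [Finset.sum_add_distrib, Finset.sum_add_distrib] at hs
        rw [sum_layer_ite (fun p => 2 * m p.2) la, sum_layer_ite (fun p => m p.2) la'] at hs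
        rw [← Finset.mul_sum, hmsum] at hs
        omega
      have hsplitD₁sum : ∑ p, D₁ p = ∑ u, D₁ (la, u) + ∑ p, D₁' p := by
        rw [sum_split_layer D₁ la]
      have htot₁ : γ * (2 ^ (k + 1) - 1) + 0 * 2 ^ (k + 1) ≤ ∑ p, D₁' p := by omega
      obtain ⟨E', e', hreach', h2e', he'sum, hlay', hdeep'⟩ :=
        ih (a + 1) ha' (by omega) 0 D₁' hsupp' htot₁
      rw [← hla'] at hlay' h2e'
      refine ⟨E' + L, e, ?_, ?_, hesum', ?_, ?_⟩
      · exact hreach1.trans (hsplitD₁ ▸ hreach'.add_right L)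
      · intro u
        have hLla : L (la, u) = D₁ (la, u) := by simp [hL]
        have hD₁la : D₁ (la, u) = D (la, u) - 2 * m u := by simp [hD₁]
        have hfu : f u = D (la, u) := rfl
        have h1 := hh₀ u
        have h2 := he u
        have h3 : 2 * e u + 2 * m u ≤ f u := by simp only [hm]; omega
        have : 2 * e u ≤ L (la, u) := by rw [hLla, hD₁la]; omega
        calc 2 * e u ≤ L (la, u) := this
        _ ≤ E' (la, u) + L (la, u) := by omega
        _ = (E' + L) (la, u) := rfl
      · have hsum : ∑ u, (E' + L) (la, u) = ∑ u, E' (la, u) + ∑ u, L (la, u) := by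
          rw [← Finset.sum_add_distrib]; rfl
        have hLsum : ∑ u, L (la, u) = ∑ u, D₁ (la, u) := by
          apply Finset.sum_congr rfl
          intro u _
          simp [hL]
        omega
      · intro i hi
        by_cases hival : i.val = a + 1
        · have hila' : i = la' := Fin.ext (by rw [hla']; exact hival)
          rw [hila']
          have hsum : ∑ u, (E' + L) (la', u) = ∑ u, E' (la', u) + ∑ u, L (la', u) := by
            rw [← Finset.sum_add_distrib]; rfl
          have hLz : ∑ u, L (la', u) = 0 := by
            apply Finset.sum_eq_zero
            intro u _
            simp [hL, Ne.symm hlane]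
          omega
        · have : a + 1 < i.val := by omega
          have hdeep := hdeep' i this
          have hsum : ∑ u, (E' + L) (i, u) = ∑ u, E' (i, u) + ∑ u, L (i, u) := by
            rw [← Finset.sum_add_distrib]; rfl
          omega
    · -- poor case
      push_neg at hrich
      set δ' := γ + 2 * δ - c with hδ'def
      set L : Fin n × V → ℕ := fun q => if q.1 = la then D q else 0 with hL
      set D' : Fin n × V → ℕ := fun p => if p.1 = la then 0 else D p with hD'
      have hsplitD : D = D' + L := by
        funext q
        by_cases h : q.1 = la <;> simp [hD', hL, h]
      have hsupp' : ∀ (j : Fin n) (u : V), j.val < a + 1 → D' (j, u) = 0 := by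
        intro j u hj
        by_cases hjla : j = la
        · simp [hD', hjla]
        · have hjv : j.val ≠ a := fun hc => hjla (Fin.ext hc)
          have : D' (j, u) = D (j, u) := by simp [hD', hjla]
          rw [this]
          exact hsupp j u (by omega)
      have hDsum : ∑ p, D p = c + ∑ p, D' p := by
        rw [hcsplit]
      have egX'' : γ * (X - 1) + γ = γ * X := by
        have h1 : X - 1 + 1 = X := by omega
        calc γ * (X - 1) + γ = γ * ((X - 1) + 1) := by ring
        _ = γ * X := by rw [h1]
      have hmulX : δ' * X + c * X = γ * X + 2 * (δ * X) := by
        have h1 : δ' + c = γ + 2 * δ := by omega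
        calc δ' * X + c * X = (δ' + c) * X := by ring
        _ = (γ + 2 * δ) * X := by rw [h1]
        _ = γ * X + 2 * (δ * X) := by ring
      have hcX : c ≤ c * X := Nat.le_mul_of_pos_right c (by omega)
      have htot₁ : γ * (X - 1) + δ' * X ≤ ∑ p, D' p := by omega
      obtain ⟨E', e', hreach', h2e', he'sum, hlay', hdeep'⟩ :=
        ih (a + 1) ha' (by omega) δ' D' hsupp' htot₁
      rw [← hla'] at hlay' h2e'
      set E₁ := E' + L with hE₁
      have hreach₁ : Reach (pathGraph n □ G) D E₁ := hsplitD ▸ hreach'.add_right L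
      have hLla' : ∀ u, L (la', u) = 0 := by
        intro u; simp [hL, Ne.symm hlane]
      have hLla : ∀ u, L (la, u) = D (la, u) := by
        intro u; simp [hL]
      have h2e'E₁ : ∀ u, 2 * e' u ≤ E₁ (la', u) := by
        intro u
        have := h2e' u
        have hEe : E₁ (la', u) = E' (la', u) + L (la', u) := rfl
        rw [hLla' u] at hEe
        omega
      have hreach₂ := reach_par (G := G) hadj.symm e' E₁ h2e'E₁
      set E₂ : Fin n × V → ℕ := fun q =>
        if q.1 = la' then E₁ q - 2 * e' q.2 else if q.1 = la then E₁ q + e' q.2 else E₁ q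
        with hE₂
      have hE₂la : ∀ u, E₂ (la, u) = E' (la, u) + D (la, u) + e' u := by
        intro u
        have h1 : E₂ (la, u) = E₁ (la, u) + e' u := by
          simp [hE₂, hlane]
        have h2 : E₁ (la, u) = E' (la, u) + L (la, u) := rfl
        rw [h1, h2, hLla u]
      have hE₂lasum : γ + 2 * δ ≤ ∑ u, E₂ (la, u) := by
        have hs : ∑ u, E₂ (la, u) = ∑ u, E' (la, u) + ∑ u, D (la, u) + ∑ u, e' u := by
          rw [← Finset.sum_add_distrib, ← Finset.sum_add_distrib]
          exact Finset.sum_congr rfl (fun u _ => hE₂la u)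
        have hcc : ∑ u, D (la, u) = c := rfl
        omega
      have hsumhalf := sum_halves (fun u => E₂ (la, u))
      have hsel : δ ≤ ∑ u, E₂ (la, u) / 2 := by omega
      obtain ⟨e, he, hesum⟩ := exists_sub_dist (fun u => E₂ (la, u) / 2) δ hsel
      refine ⟨E₂, e, hreach₁.trans hreach₂, ?_, hesum, hE₂lasum, ?_⟩
      · intro u
        have := he u
        omega
      · intro i hi
        by_cases hival : i.val = a + 1
        · have hila' : i = la' := Fin.ext (by rw [hla']; exact hival)
          rw [hila']
          have hpt : ∀ u, E₂ (la', u) + 2 * e' u = E' (la', u) := by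
            intro u
            have h1 : E₂ (la', u) = E₁ (la', u) - 2 * e' u := by
              simp [hE₂]
            have h2 : E₁ (la', u) = E' (la', u) + L (la', u) := rfl
            have h3 := h2e'E₁ u
            rw [h1, h2, hLla' u]
            rw [h2, hLla' u] at h3
            omega
          have hs : ∑ u, (E₂ (la', u) + 2 * e' u) = ∑ u, E' (la', u) :=
            Finset.sum_congr rfl (fun u _ => hpt u)
          rw [Finset.sum_add_distrib, ← Finset.mul_sum] at hs
          omega
        · have hia : a + 1 < i.val := by omega
          have hine : i ≠ la := by
            intro hc
            rw [hc] at hia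
            simp only [hla, Fin.val_mk] at hia
            omega
          have hine' : i ≠ la' := by
            intro hc
            rw [hc] at hia
            simp only [hla', Fin.val_mk] at hia
            omega
          have hpt : ∀ u, E₂ (i, u) = E' (i, u) := by
            intro u
            have h1 : E₂ (i, u) = E₁ (i, u) := by
              simp [hE₂, hine, hine']
            have h2 : E₁ (i, u) = E' (i, u) + L (i, u) := rfl
            have h3 : L (i, u) = 0 := by simp [hL, hine]
            rw [h1, h2, h3]
            omega
          have hs : ∑ u, E₂ (i, u) = ∑ u, E' (i, u) :=
            Finset.sum_congr rfl (fun u _ => hpt u)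
          rw [hs]
          exact hdeep' i hia

end Main

section Assembly

variable {V : Type*} [DecidableEq V] [Fintype V]

theorem prod_mem_cover_set [Nonempty V] (G : SimpleGraph V) (hG : G.Connected) (n : ℕ)
    (hn : 1 ≤ n) (D : Fin n × V → ℕ)
    (hsum : ∑ p, D p = coverPebblingNumber G * (2 ^ n - 1)) :
    Coverable (pathGraph n □ G) D := by
  set γ := coverPebblingNumber G with hγ
  have HQ := gamma_mem hG (G := G)
  have hB : Fintype.card V ≤ γ := card_le_gamma hG
  have h0n : 0 < n := hn
  have hkn : n - 1 + 1 = n := by omega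
  have htot : γ * (2 ^ (n - 1 + 1) - 1) + 0 * 2 ^ (n - 1 + 1) ≤ ∑ p, D p := by
    rw [hkn, hsum]
    omega
  obtain ⟨E, e, hreach, _, _, hlay0, hdeep⟩ :=
    main_induction (G := G) γ hB (n - 1) 0 h0n (by omega) 0 D
      (fun j u hj => absurd hj (by omega)) htot
  have hall : ∀ i : Fin n, γ ≤ ∑ u, E (i, u) := by
    intro i
    by_cases hi : i.val = 0
    · have : i = ⟨0, h0n⟩ := Fin.ext hi
      rw [this]
      omega
    · exact hdeep i (by omega)
  have hcov : ∀ i : Fin n, ∃ Ef : V → ℕ,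
      Reach G (fun u => E (i, u)) Ef ∧ ∀ u, 1 ≤ Ef u := by
    intro i
    have := coverable_of_le HQ (fun u => E (i, u)) (hall i)
    obtain ⟨Ef, hr, h1⟩ := this
    exact ⟨Ef, hr, h1⟩
  choose Ef hEf h1f using hcov
  have hlifted : Reach (pathGraph n □ G)
      (∑ i : Fin n, liftF i (fun u => E (i, u))) (∑ i : Fin n, liftF i (Ef i)) :=
    reach_sum Finset.univ _ _ (fun i _ => reach_lift (hEf i))
  rw [sum_liftF_layers E] at hlifted
  refine ⟨∑ i : Fin n, liftF i (Ef i), hreach.trans hlifted, ?_⟩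
  intro q
  have : (∑ i : Fin n, liftF i (Ef i)) q = ∑ i : Fin n, (if q.1 = i then Ef i q.2 else 0) := by
    rw [Finset.sum_apply]
    rfl
  rw [this]
  have hsingle : ∑ i : Fin n, (if q.1 = i then Ef i q.2 else 0) = Ef q.1 q.2 := by
    simp
  rw [hsingle]
  exact h1f q.1 q.2

theorem cover_pebbling_path_prod' [Nonempty V]
    (G : SimpleGraph V) (hG : G.Connected) (n : ℕ) (hn : 1 ≤ n) :
    coverPebblingNumber (pathGraph n □ G) ≤ coverPebblingNumber G * (2 ^ n - 1) :=
  Nat.sInf_le (fun D hD => prod_mem_cover_set G hG n hn D hD)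

end Assembly

theorem cover_pebbling_path_prod {V : Type*} [DecidableEq V] [Fintype V] [Nonempty V]
    (G : SimpleGraph V) (hG : G.Connected) (n : ℕ) (hn : 1 ≤ n) :
    coverPebblingNumber (pathGraph n □ G) ≤ coverPebblingNumber G * (2 ^ n - 1) := by
  exact cover_pebbling_path_prod' G hG n hn
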